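/- Let k be a field and C a projective Gorenstein integral curve over k with k = H^0(C, O_C) and ω_C^{−1} ample. If C is geometrically integral over k, then C is smooth over k. -/

import Mathlib

open MvPolynomial

private lemma deg3 (m : Fin 3 →₀ ℕ) : m.degree = m 0 + m 1 + m 2 := by
  rw [Finsupp.degree_apply, Finset.sum_subset (Finset.subset_univ _)
    (fun i _ h => Finsupp.notMem_support_iff.mp h), Fin.sum_univ_three]

private lemma fin3_repr (m : Fin 3 →₀ ℕ) :
    m = Finsupp.single 0 (m 0) + Finsupp.single 1 (m 1) + Finsupp.single 2 (m 2) := by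
  ext i; fin_cases i <;> simp [Finsupp.single_apply]

private lemma decomp {R : Type*} [CommRing R] (Q : MvPolynomial (Fin 3) R)
    (h : Q.IsHomogeneous 2) :
    Q = C (coeff (Finsupp.single 0 2) Q) * X 0 ^ 2
      + C (coeff (Finsupp.single 1 2) Q) * X 1 ^ 2
      + C (coeff (Finsupp.single 2 2) Q) * X 2 ^ 2
      + C (coeff (Finsupp.single 0 1 + Finsupp.single 1 1) Q) * (X 0 * X 1)
      + C (coeff (Finsupp.single 0 1 + Finsupp.single 2 1) Q) * (X 0 * X 2)
      + C (coeff (Finsupp.single 1 1 + Finsupp.single 2 1) Q) * (X 1 * X 2) := by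
  have hX : ∀ (i j : Fin 3), (X i * X j : MvPolynomial (Fin 3) R)
      = monomial (Finsupp.single i 1 + Finsupp.single j 1) 1 := by
    intro i j
    rw [X, X, monomial_mul, one_mul]
  ext m
  rw [X_pow_eq_monomial, X_pow_eq_monomial, X_pow_eq_monomial, hX, hX, hX]
  simp only [coeff_add, C_mul_monomial, mul_one, coeff_monomial]
  by_cases hm : m.degree = 2
  · have hs : m 0 + m 1 + m 2 = 2 := by rw [← deg3, hm]
    have h6 : (m 0 = 2 ∧ m 1 = 0 ∧ m 2 = 0) ∨ (m 0 = 0 ∧ m 1 = 2 ∧ m 2 = 0) ∨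
        (m 0 = 0 ∧ m 1 = 0 ∧ m 2 = 2) ∨ (m 0 = 1 ∧ m 1 = 1 ∧ m 2 = 0) ∨
        (m 0 = 1 ∧ m 1 = 0 ∧ m 2 = 1) ∨ (m 0 = 0 ∧ m 1 = 1 ∧ m 2 = 1) := by omega
    have hr := fin3_repr m
    rcases h6 with ⟨h0, h1, h2⟩ | ⟨h0, h1, h2⟩ | ⟨h0, h1, h2⟩ | ⟨h0, h1, h2⟩ |
        ⟨h0, h1, h2⟩ | ⟨h0, h1, h2⟩ <;>
      rw [h0, h1, h2] at hr <;> simp only [Finsupp.single_zero, add_zero, zero_add] at hr <;>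
      subst hr <;>
      simp [Finsupp.ext_iff, Fin.forall_fin_succ, Finsupp.single_apply]
  · rw [h.coeff_eq_zero hm]
    rw [if_neg, if_neg, if_neg, if_neg, if_neg, if_neg]
    · simp
    all_goals (rintro rfl; apply hm; simp [deg3, Finsupp.single_apply])

private lemma quadFactor {K : Type*} [Field K] [IsAlgClosed K] (b f c : K) :
    ∃ α₁ α₂ β₁ β₂ : K, b = α₁ * β₁ ∧ f = α₁ * β₂ + α₂ * β₁ ∧ c = α₂ * β₂ := by
  by_cases hb : b = 0
  · exact ⟨0, 1, f, c, by simp [hb], by ring, by ring⟩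
  · obtain ⟨r, hr⟩ := IsAlgClosed.exists_root
      (Polynomial.C b * Polynomial.X ^ 2 + Polynomial.C f * Polynomial.X + Polynomial.C c)
      (by rw [Polynomial.degree_quadratic hb]; exact (by decide))
    have hr' : b * r ^ 2 + f * r + c = 0 := by
      simpa [Polynomial.IsRoot] using hr
    exact ⟨1, -r, b, f + b * r, by ring, by ring, by linear_combination hr'⟩

private lemma core {K : Type*} [Field K] [IsAlgClosed K] (a b c d e f y₀ y₁ y₂ : K)
    (hy : y₀ ≠ 0)
    (h0 : a * y₀ ^ 2 + b * y₁ ^ 2 + c * y₂ ^ 2 + d * (y₀ * y₁) + e * (y₀ * y₂)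
      + f * (y₁ * y₂) = 0)
    (h2 : d * y₀ + 2 * b * y₁ + f * y₂ = 0)
    (h3 : e * y₀ + f * y₁ + 2 * c * y₂ = 0) :
    ∃ α₀ α₁ α₂ β₀ β₁ β₂ : K,
      a = α₀ * β₀ ∧ b = α₁ * β₁ ∧ c = α₂ * β₂ ∧
      d = α₀ * β₁ + α₁ * β₀ ∧ e = α₀ * β₂ + α₂ * β₀ ∧ f = α₁ * β₂ + α₂ * β₁ := by
  obtain ⟨α₁, α₂, β₁, β₂, hb, hf, hc⟩ := quadFactor b f c
  obtain ⟨s, t, rfl, rfl⟩ : ∃ s t : K, y₁ = s * y₀ ∧ y₂ = t * y₀ :=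
    ⟨y₁ / y₀, y₂ / y₀, by field_simp, by field_simp⟩
  have hd' : d = -(2 * b * s + f * t) := mul_right_cancel₀ hy (by linear_combination h2)
  have he' : e = -(2 * c * t + f * s) := mul_right_cancel₀ hy (by linear_combination h3)
  have ha' : a = b * s ^ 2 + f * (s * t) + c * t ^ 2 :=
    mul_right_cancel₀ (pow_ne_zero 2 hy)
      (by linear_combination h0 - s * y₀ * h2 - t * y₀ * h3)
  refine ⟨-(α₁ * s + α₂ * t), α₁, α₂, -(β₁ * s + β₂ * t), β₁, β₂, ?_, hb, hc, ?_, ?_, hf⟩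
  · linear_combination ha' + s ^ 2 * hb + (s * t) * hf + t ^ 2 * hc
  · linear_combination hd' - 2 * s * hb - t * hf
  · linear_combination he' - s * hf - 2 * t * hc

private lemma factor' {K : Type*} [CommRing K] (a b c d e f α₀ α₁ α₂ β₀ β₁ β₂ : K)
    (ha : a = α₀ * β₀) (hb : b = α₁ * β₁) (hc : c = α₂ * β₂)
    (hd : d = α₀ * β₁ + α₁ * β₀) (he : e = α₀ * β₂ + α₂ * β₀)
    (hf : f = α₁ * β₂ + α₂ * β₁) :
    (C a * X 0 ^ 2 + C b * X 1 ^ 2 + C c * X 2 ^ 2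
      + C d * (X 0 * X 1) + C e * (X 0 * X 2)
      + C f * (X 1 * X 2) : MvPolynomial (Fin 3) K)
    = (C α₀ * X 0 + C α₁ * X 1 + C α₂ * X 2) * (C β₀ * X 0 + C β₁ * X 1 + C β₂ * X 2) := by
  subst ha hb hc hd he hf
  simp only [C_add, C_mul]
  ring

/-- Let `k` be a field and `C` a projective Gorenstein integral curve over `k`
with `k = H⁰(C, O_C)` and `ω_C⁻¹` ample; such a curve is a conic in `ℙ²_k`, i.e.
`C = Proj k[x,y,z]/(q)` for a homogeneous polynomial `q` of degree `2`.  If `C` is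
geometrically integral over `k` (i.e. `q` remains irreducible over `k̄`), then `C` is smooth
over `k`: by the Jacobian criterion, `q` and its partial derivatives have no common
projective zero over `k̄`. -/
theorem stmt8 (k : Type*) [Field k] (q : MvPolynomial (Fin 3) k)
    (hq : q.IsHomogeneous 2) (hq0 : q ≠ 0)
    (hgeomint : Irreducible (MvPolynomial.map (algebraMap k (AlgebraicClosure k)) q)) :
    ∀ x : Fin 3 → AlgebraicClosure k,
      eval x (MvPolynomial.map (algebraMap k (AlgebraicClosure k)) q) = 0 →
      (∀ i : Fin 3,
        eval x (pderiv i (MvPolynomial.map (algebraMap k (AlgebraicClosure k)) q)) = 0) →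
      x = 0 := by
  intro x hx hdx
  set Q := MvPolynomial.map (algebraMap k (AlgebraicClosure k)) q with hQdef
  have hQ2 : Q.IsHomogeneous 2 := hq.map _
  obtain ⟨a, b, c, d, e, f, hdec⟩ :
      ∃ a b c d e f : AlgebraicClosure k, Q = C a * X 0 ^ 2 + C b * X 1 ^ 2 + C c * X 2 ^ 2
        + C d * (X 0 * X 1) + C e * (X 0 * X 2) + C f * (X 1 * X 2) :=
    ⟨_, _, _, _, _, _, decomp Q hQ2⟩
  by_contra hx0
  obtain ⟨j, hj⟩ := Function.ne_iff.mp hx0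
  have h1 := hdx 0
  have h2 := hdx 1
  have h3 := hdx 2
  rw [hdec] at hx h1 h2 h3
  have h0' : a * x 0 ^ 2 + b * x 1 ^ 2 + c * x 2 ^ 2 + d * (x 0 * x 1) + e * (x 0 * x 2)
      + f * (x 1 * x 2) = 0 := by simpa using hx
  simp only [map_add, pderiv_C_mul, pderiv_pow, pderiv_mul, pderiv_X] at h1 h2 h3
  simp [Pi.single_apply] at h1 h2 h3
  have h1' : 2 * a * x 0 + d * x 1 + e * x 2 = 0 := by linear_combination h1
  have h2' : d * x 0 + 2 * b * x 1 + f * x 2 = 0 := by linear_combination h2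
  have h3' : e * x 0 + f * x 1 + 2 * c * x 2 = 0 := by linear_combination h3
  have hfac : ∃ α₀ α₁ α₂ β₀ β₁ β₂ : AlgebraicClosure k,
      Q = (C α₀ * X 0 + C α₁ * X 1 + C α₂ * X 2) * (C β₀ * X 0 + C β₁ * X 1 + C β₂ * X 2) := by
    have hj' : x j ≠ 0 := by simpa using hj
    fin_cases j
    · obtain ⟨α₀, α₁, α₂, β₀, β₁, β₂, hA, hB, hC, hD, hE, hF⟩ :=
        core a b c d e f (x 0) (x 1) (x 2) hj' h0' h2' h3'
      exact ⟨α₀, α₁, α₂, β₀, β₁, β₂, by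
        rw [hdec]; exact factor' a b c d e f α₀ α₁ α₂ β₀ β₁ β₂ hA hB hC hD hE hF⟩
    · obtain ⟨α₀, α₁, α₂, β₀, β₁, β₂, hA, hB, hC, hD, hE, hF⟩ :=
        core b a c d f e (x 1) (x 0) (x 2) hj' (by linear_combination h0')
          (by linear_combination h1') (by linear_combination h3')
      exact ⟨α₁, α₀, α₂, β₁, β₀, β₂, by
        rw [hdec]
        exact factor' a b c d e f α₁ α₀ α₂ β₁ β₀ β₂ (by linear_combination hB)
          (by linear_combination hA) (by linear_combination hC)
          (by linear_combination hD) (by linear_combination hF) (by linear_combination hE)⟩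
    · obtain ⟨α₀, α₁, α₂, β₀, β₁, β₂, hA, hB, hC, hD, hE, hF⟩ :=
        core c b a f e d (x 2) (x 1) (x 0) hj' (by linear_combination h0')
          (by linear_combination h2') (by linear_combination h1')
      exact ⟨α₂, α₁, α₀, β₂, β₁, β₀, by
        rw [hdec]
        exact factor' a b c d e f α₂ α₁ α₀ β₂ β₁ β₀ (by linear_combination hC)
          (by linear_combination hB) (by linear_combination hA)
          (by linear_combination hF) (by linear_combination hE) (by linear_combination hD)⟩
  obtain ⟨α₀, α₁, α₂, β₀, β₁, β₂, hQfac⟩ := hfac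
  rcases hgeomint.isUnit_or_isUnit hQfac with hu | hu <;>
    simpa using hu.map (eval (0 : Fin 3 → AlgebraicClosure k))
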